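/- Let (h_k) be nonnegative with h_{k+1} ≤ h_k(1 - 1/(k+3)) whenever h_k > 2L_kD²/(k+3), and h_{k+1} ≤ 2L_kD²/(k+3) whenever h_k ≤ 2L_kD²/(k+3), where L_k > 0 and D > 0. If h_k ≤ 2D²(max_{0≤j≤k-1} L_j)/(k+2), then h_{k+1} ≤ 2D²(max_{0≤j≤k} L_j)/(k+3). -/
import Mathlib


theorem stmt15 (h L : ℕ → ℝ) (D : ℝ) (hD : 0 < D)
    (hL : ∀ j, 0 < L j) (hh : ∀ j, 0 ≤ h j)
    (k : ℕ) (hk : 1 ≤ k)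
    (hcase1 : 2 * L k * D ^ 2 / ((k : ℝ) + 3) < h k →
      h (k + 1) ≤ h k * (1 - 1 / ((k : ℝ) + 3)))
    (hcase2 : h k ≤ 2 * L k * D ^ 2 / ((k : ℝ) + 3) →
      h (k + 1) ≤ 2 * L k * D ^ 2 / ((k : ℝ) + 3))
    (hind : h k ≤ 2 * D ^ 2 *
      (Finset.range k).sup' (Finset.nonempty_range_iff.mpr (by omega)) L /
      ((k : ℝ) + 2)) :
    h (k + 1) ≤ 2 * D ^ 2 *
      (Finset.range (k + 1)).sup' (Finset.nonempty_range_iff.mpr (by omega)) L /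
      ((k : ℝ) + 3) := by
  set M := (Finset.range k).sup' (Finset.nonempty_range_iff.mpr (by omega)) L with hM
  set M' := (Finset.range (k + 1)).sup' (Finset.nonempty_range_iff.mpr (by omega)) L with hM'
  have hMM' : M ≤ M' :=
    Finset.sup'_le _ _ fun j hj =>
      Finset.le_sup' L (Finset.mem_range.mpr (by exact Nat.lt_succ_of_lt (Finset.mem_range.mp hj)))
  have hLM' : L k ≤ M' := Finset.le_sup' L (Finset.mem_range.mpr (Nat.lt_succ_self k))
  have hk3 : (0 : ℝ) < (k : ℝ) + 3 := by positivity
  have hk2 : (0 : ℝ) < (k : ℝ) + 2 := by positivity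
  rcases le_or_gt (h k) (2 * L k * D ^ 2 / ((k : ℝ) + 3)) with hc | hc
  · calc h (k + 1) ≤ 2 * L k * D ^ 2 / ((k : ℝ) + 3) := hcase2 hc
      _ ≤ 2 * D ^ 2 * M' / ((k : ℝ) + 3) := by
          apply div_le_div_of_nonneg_right _ hk3.le
          nlinarith [sq_nonneg D]
  · calc h (k + 1) ≤ h k * (1 - 1 / ((k : ℝ) + 3)) := hcase1 hc
      _ ≤ (2 * D ^ 2 * M / ((k : ℝ) + 2)) * (1 - 1 / ((k : ℝ) + 3)) := by
          apply mul_le_mul_of_nonneg_right hind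
          rw [sub_nonneg]
          rw [div_le_one hk3]; linarith
      _ = 2 * D ^ 2 * M / ((k : ℝ) + 3) := by
          field_simp
          ring
      _ ≤ 2 * D ^ 2 * M' / ((k : ℝ) + 3) := by
          apply div_le_div_of_nonneg_right _ hk3.le
          nlinarith [sq_nonneg D]
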